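/- Fix an integer D ≥ 2, real numbers α > 0 and p ∈ (1,2), and k ∈ ℕ₀, and let ε̲, ε̄₁, ε̄₂, ε̄ be as defined in the context. Then the function r ↦ ε̄(r) − ε̲(r) is continuous and strictly decreasing on the interval (1, min{p, D/(D−1)}), there exists a unique r₀ ∈ (1, min{p, D/(D−1)}) with ε̄(r₀) = ε̲(r₀), and ε̲(r) < ε̄(r) for every r ∈ (1, r₀). -/

import Mathlib

/-- The lower threshold `ε̲(r)` from the parameter analysis. -/
noncomputable def elow (D : ℕ) (α p r : ℝ) : ℝ :=
  (4 + 2 * α) * (2 - p) * ((D : ℝ) - 1) * (r - 1) /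
    (2 * α * ((D : ℝ) + 1) * (p - r) + (2 + 3 * α) * (2 - p) * ((D : ℝ) - 1) * (r - 1))

/-- The upper threshold `ε̄₁(r)`. -/
noncomputable def ebar1 (D : ℕ) (α r : ℝ) : ℝ :=
  (8 + 4 * α) /
    (4 + 6 * α + (2 + α) * ((D : ℝ) + 1) * r / ((D : ℝ) - 1 - ((D : ℝ) - 2) * r))

/-- The upper threshold `ε̄₂(r)`. -/
noncomputable def ebar2 (D : ℕ) (k : ℕ) (r : ℝ) : ℝ :=
  ((D : ℝ) - ((D : ℝ) - 1) * r) / (((D : ℝ) + ((k : ℝ) + 1) / 2) * r)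

/-- The upper threshold `ε̄(r) = min {ε̄₁(r), ε̄₂(r)}`. -/
noncomputable def ebar (D : ℕ) (α : ℝ) (k : ℕ) (r : ℝ) : ℝ :=
  min (ebar1 D α r) (ebar2 D k r)

open Set

/-! On `[1, m]` with `m = min p (D / (D - 1))`, `ε̲` is a ratio of the form
`A (r - 1) / (B (p - r) + C (r - 1))` with `A, B, C > 0`, hence strictly increasing from
`ε̲(1) = 0`, while `ε̄₁` and `ε̄₂` are strictly decreasing; so `ε̄ - ε̲` is continuous and
strictly decreasing. It is positive at `1` and negative at `m`: if `m = p`, then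
`ε̲(p) = (4 + 2α) / (2 + 3α) = (8 + 4α) / (4 + 6α) > ε̄₁(p)`; if `m = D / (D - 1)`, then
`ε̄₂(m) = 0 < ε̲(m)`. The intermediate value theorem produces `r₀`, and strict monotonicity
gives its uniqueness and the sign of `ε̄ - ε̲` to its left. -/

section Ratio

variable {A B C p : ℝ}

lemma ratio_denom_pos (hB : 0 < B) (hC : 0 < C) (hp : 1 < p) {r : ℝ} (hr : r ∈ Icc 1 p) :
    0 < B * (p - r) + C * (r - 1) := by
  rcases hr.1.eq_or_lt with rfl | h1
  · nlinarith
  · nlinarith [mul_nonneg hB.le (sub_nonneg.2 hr.2)]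

lemma strictMonoOn_ratio (hA : 0 < A) (hB : 0 < B) (hC : 0 < C) (hp : 1 < p) :
    StrictMonoOn (fun r => A * (r - 1) / (B * (p - r) + C * (r - 1))) (Icc 1 p) := by
  intro r hr s hs hrs
  -- after cross-multiplying, the two sides differ by `A * B * (p - 1) * (s - r)`
  rw [div_lt_div_iff₀ (ratio_denom_pos hB hC hp hr) (ratio_denom_pos hB hC hp hs)]
  nlinarith [mul_pos (mul_pos hA hB) (mul_pos (sub_pos.2 hrs) (sub_pos.2 hp))]

end Ratio

section Thresholds

variable {D k : ℕ} {α p : ℝ}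

lemma elow_denom_pos (hD : 1 < D) (hα : 0 < α) (hp1 : 1 < p) (hp2 : p < 2) {r : ℝ}
    (hr : r ∈ Icc 1 p) :
    0 < 2 * α * ((D : ℝ) + 1) * (p - r) + (2 + 3 * α) * (2 - p) * ((D : ℝ) - 1) * (r - 1) := by
  have hD' : (1 : ℝ) < D := by exact_mod_cast hD
  exact ratio_denom_pos (by positivity) (mul_pos (mul_pos (by positivity) (by linarith))
    (by linarith)) hp1 hr

lemma strictMonoOn_elow (hD : 1 < D) (hα : 0 < α) (hp1 : 1 < p) (hp2 : p < 2) :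
    StrictMonoOn (elow D α p) (Icc 1 p) := by
  have hD' : (1 : ℝ) < D := by exact_mod_cast hD
  exact strictMonoOn_ratio (mul_pos (mul_pos (by positivity) (by linarith)) (by linarith))
    (by positivity) (mul_pos (mul_pos (by positivity) (by linarith)) (by linarith)) hp1

lemma continuousOn_elow (hD : 1 < D) (hα : 0 < α) (hp1 : 1 < p) (hp2 : p < 2) :
    ContinuousOn (elow D α p) (Icc 1 p) :=
  ContinuousOn.div (by fun_prop) (by fun_prop)
    fun _ hr => (elow_denom_pos hD hα hp1 hp2 hr).ne'

@[simp]
lemma elow_one : elow D α p 1 = 0 := by simp [elow]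

lemma elow_self (hD : 1 < D) (hα : 0 < α) (hp1 : 1 < p) (hp2 : p < 2) :
    elow D α p p = (4 + 2 * α) / (2 + 3 * α) := by
  have hD' : (1 : ℝ) < D := by exact_mod_cast hD
  rw [elow, div_eq_div_iff (elow_denom_pos hD hα hp1 hp2 ⟨hp1.le, le_rfl⟩).ne' (by positivity)]
  ring

lemma ebar1_inner_pos (hD : 2 ≤ D) {r : ℝ} (hr : r ≤ D / ((D : ℝ) - 1)) :
    0 < (D : ℝ) - 1 - ((D : ℝ) - 2) * r := by
  have hD' : (2 : ℝ) ≤ D := by exact_mod_cast hD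
  rw [le_div_iff₀ (by linarith)] at hr
  -- `(D - 2) (D - 1) r ≤ (D - 2) D < (D - 1) ^ 2`
  nlinarith [mul_le_mul_of_nonneg_left hr (sub_nonneg.2 hD')]

lemma ebar1_denom_pos (hD : 2 ≤ D) (hα : 0 < α) {r : ℝ} (hr : r ∈ Icc 0 (D / ((D : ℝ) - 1))) :
    0 < 4 + 6 * α + (2 + α) * ((D : ℝ) + 1) * r / ((D : ℝ) - 1 - ((D : ℝ) - 2) * r) := by
  have := ebar1_inner_pos hD hr.2
  have := hr.1
  positivity

lemma strictAntiOn_ebar1 (hD : 2 ≤ D) (hα : 0 < α) :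
    StrictAntiOn (ebar1 D α) (Icc 0 (D / ((D : ℝ) - 1))) := by
  intro r hr s hs hrs
  have hD' : (2 : ℝ) ≤ D := by exact_mod_cast hD
  have hgr := ebar1_inner_pos hD hr.2
  have hgs := ebar1_inner_pos hD hs.2
  have key : r / ((D : ℝ) - 1 - ((D : ℝ) - 2) * r) < s / ((D : ℝ) - 1 - ((D : ℝ) - 2) * s) := by
    rw [div_lt_div_iff₀ hgr hgs]
    nlinarith
  refine div_lt_div_of_pos_left (by positivity) (ebar1_denom_pos hD hα hr) ?_
  simp only [mul_div_assoc]
  gcongr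

lemma continuousOn_ebar1 (hD : 2 ≤ D) (hα : 0 < α) :
    ContinuousOn (ebar1 D α) (Icc 0 (D / ((D : ℝ) - 1))) :=
  continuousOn_const.div
    (continuousOn_const.add (ContinuousOn.div (by fun_prop) (by fun_prop)
      fun _ hr => (ebar1_inner_pos hD hr.2).ne'))
    fun _ hr => (ebar1_denom_pos hD hα hr).ne'

lemma ebar1_lt (hD : 2 ≤ D) (hα : 0 < α) {r : ℝ} (hr : r ∈ Ioc 0 (D / ((D : ℝ) - 1))) :
    ebar1 D α r < (4 + 2 * α) / (2 + 3 * α) := by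
  have := ebar1_inner_pos hD hr.2
  have := hr.1
  calc ebar1 D α r < (8 + 4 * α) / (4 + 6 * α) :=
        div_lt_div_of_pos_left (by positivity) (by positivity)
          (by simp only [lt_add_iff_pos_right]; positivity)
    _ = (4 + 2 * α) / (2 + 3 * α) := by
        rw [div_eq_div_iff (by positivity) (by positivity)]
        ring

lemma strictAntiOn_ebar2 (hD : 0 < D) : StrictAntiOn (ebar2 D k) (Ioi 0) := by
  intro r hr s hs hrs
  have hK : (0 : ℝ) < D + ((k : ℝ) + 1) / 2 := by positivity
  have hD' : (0 : ℝ) < D := by exact_mod_cast hD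
  rw [ebar2, ebar2, div_lt_div_iff₀ (mul_pos hK hs) (mul_pos hK hr)]
  nlinarith [mul_pos (mul_pos hK hD') (sub_pos.2 hrs)]

lemma continuousOn_ebar2 : ContinuousOn (ebar2 D k) (Ioi 0) :=
  ContinuousOn.div (by fun_prop) (by fun_prop) fun r (hr : 0 < r) => by positivity

lemma ebar2_eq_zero {r : ℝ} (hr : ((D : ℝ) - 1) * r = D) : ebar2 D k r = 0 := by
  rw [ebar2, hr, sub_self, zero_div]

lemma strictAntiOn_ebar (hD : 2 ≤ D) (hα : 0 < α) :
    StrictAntiOn (ebar D α k) (Ioc 0 (D / ((D : ℝ) - 1))) := fun _ hr _ hs hrs =>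
  min_lt_min (strictAntiOn_ebar1 hD hα (Ioc_subset_Icc_self hr) (Ioc_subset_Icc_self hs) hrs)
    (strictAntiOn_ebar2 (by omega) hr.1 hs.1 hrs)

lemma continuousOn_ebar (hD : 2 ≤ D) (hα : 0 < α) :
    ContinuousOn (ebar D α k) (Ioc 0 (D / ((D : ℝ) - 1))) :=
  ((continuousOn_ebar1 hD hα).mono Ioc_subset_Icc_self).inf
    (continuousOn_ebar2.mono fun _ hr => hr.1)

lemma ebar_one_pos (hD : 2 ≤ D) (hα : 0 < α) : 0 < ebar D α k 1 := by
  have hD' : (2 : ℝ) ≤ D := by exact_mod_cast hD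
  refine lt_min (div_pos (by positivity) (ebar1_denom_pos hD hα ⟨zero_le_one, ?_⟩)) ?_
  · rw [le_div_iff₀ (by linarith)]; linarith
  · rw [ebar2]; ring_nf; positivity

lemma ebar_lt_elow_min (hD : 2 ≤ D) (hα : 0 < α) (hp1 : 1 < p) (hp2 : p < 2) :
    ebar D α k (min p (D / ((D : ℝ) - 1))) < elow D α p (min p (D / ((D : ℝ) - 1))) := by
  have hD' : (2 : ℝ) ≤ D := by exact_mod_cast hD
  rcases le_total p (D / ((D : ℝ) - 1)) with h | h
  · rw [min_eq_left h, elow_self hD hα hp1 hp2]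
    exact (min_le_left _ _).trans_lt (ebar1_lt hD hα ⟨by linarith, h⟩)
  · rw [min_eq_right h]
    have h1 : 1 < (D : ℝ) / (D - 1) := by rw [one_lt_div (by linarith)]; linarith
    calc ebar D α k (D / ((D : ℝ) - 1)) ≤ 0 :=
          (min_le_right _ _).trans (ebar2_eq_zero (mul_div_cancel₀ _ (by linarith))).le
      _ = elow D α p 1 := elow_one.symm
      _ < elow D α p (D / ((D : ℝ) - 1)) :=
          strictMonoOn_elow hD hα hp1 hp2 ⟨le_rfl, hp1.le⟩ ⟨h1.le, h⟩ h1

end Thresholds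

lemma StrictAntiOn.exists_unique_zero_mem_Ioo {f : ℝ → ℝ} {a b : ℝ} (hab : a ≤ b)
    (hcont : ContinuousOn f (Icc a b)) (hanti : StrictAntiOn f (Icc a b))
    (ha : 0 < f a) (hb : f b < 0) :
    ∃ c ∈ Ioo a b, f c = 0 ∧ (∀ x ∈ Ioo a b, f x = 0 → x = c) ∧ ∀ x ∈ Ioo a c, 0 < f x := by
  obtain ⟨c, hc, hfc⟩ := intermediate_value_Icc' hab hcont ⟨hb.le, ha.le⟩
  have hca : c ≠ a := by rintro rfl; linarith
  have hcb : c ≠ b := by rintro rfl; linarith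
  have hc' : c ∈ Ioo a b := ⟨lt_of_le_of_ne hc.1 hca.symm, lt_of_le_of_ne hc.2 hcb⟩
  refine ⟨c, hc', hfc, fun x hx hfx => hanti.injOn (Ioo_subset_Icc_self hx) hc (hfx.trans hfc.symm),
    fun x hx => ?_⟩
  rw [← hfc]
  exact hanti ⟨hx.1.le, hx.2.le.trans hc.2⟩ hc hx.2

/-- For `D ≥ 2`, `α > 0`, `p ∈ (1,2)`, `k ∈ ℕ₀`, the function
`r ↦ ε̄(r) - ε̲(r)` is continuous and strictly decreasing on `(1, min {p, D/(D-1)})`,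
there is a unique `r₀` in this interval with `ε̄(r₀) = ε̲(r₀)`, and `ε̲(r) < ε̄(r)` for
every `r ∈ (1, r₀)`. -/
theorem stmt16 (D : ℕ) (hD : 2 ≤ D) (α p : ℝ) (hα : 0 < α)
    (hp1 : 1 < p) (hp2 : p < 2) (k : ℕ) :
    ContinuousOn (fun r => ebar D α k r - elow D α p r)
      (Set.Ioo 1 (min p ((D : ℝ) / ((D : ℝ) - 1)))) ∧
    StrictAntiOn (fun r => ebar D α k r - elow D α p r)
      (Set.Ioo 1 (min p ((D : ℝ) / ((D : ℝ) - 1)))) ∧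
    ∃ r₀ ∈ Set.Ioo (1 : ℝ) (min p ((D : ℝ) / ((D : ℝ) - 1))),
      ebar D α k r₀ = elow D α p r₀ ∧
      (∀ r ∈ Set.Ioo (1 : ℝ) (min p ((D : ℝ) / ((D : ℝ) - 1))),
        ebar D α k r = elow D α p r → r = r₀) ∧
      ∀ r ∈ Set.Ioo (1 : ℝ) r₀, elow D α p r < ebar D α k r := by
  set m := min p ((D : ℝ) / ((D : ℝ) - 1))
  have hsub_p : Icc 1 m ⊆ Icc 1 p := Icc_subset_Icc_right (min_le_left _ _)
  have hsub_D : Icc 1 m ⊆ Ioc 0 (D / ((D : ℝ) - 1)) := fun r hr =>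
    ⟨by linarith [hr.1], hr.2.trans (min_le_right _ _)⟩
  have hcont : ContinuousOn (fun r => ebar D α k r - elow D α p r) (Icc 1 m) :=
    ((continuousOn_ebar hD hα).mono hsub_D).sub ((continuousOn_elow hD hα hp1 hp2).mono hsub_p)
  have hanti : StrictAntiOn (fun r => ebar D α k r - elow D α p r) (Icc 1 m) :=
    fun r hr s hs hrs => sub_lt_sub (strictAntiOn_ebar hD hα (hsub_D hr) (hsub_D hs) hrs)
      (strictMonoOn_elow hD hα hp1 hp2 (hsub_p hr) (hsub_p hs) hrs)
  have hD' : (2 : ℝ) ≤ D := by exact_mod_cast hD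
  have hm : 1 ≤ m := le_min hp1.le ((one_le_div (by linarith)).2 (by linarith))
  obtain ⟨r₀, hr₀, hzero, huniq, hpos⟩ := hanti.exists_unique_zero_mem_Ioo hm hcont
    (by simpa using ebar_one_pos hD hα) (sub_neg.2 (ebar_lt_elow_min hD hα hp1 hp2))
  exact ⟨hcont.mono Ioo_subset_Icc_self, hanti.mono Ioo_subset_Icc_self, r₀, hr₀,
    sub_eq_zero.1 hzero, fun r hr h => huniq r hr (sub_eq_zero.2 h),
    fun r hr => sub_pos.1 (hpos r hr)⟩
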